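/- arXiv:1610.04918 — 5 statements merged into one kernel-verified Lean document; each statement's English description precedes it below -/
import Mathlib

section
/- With respect to the lattice N = ℤ⁴, let σ ⊆ ℝ⁴ be the cone generated by the four points (1,0,0,0), (0,1,0,0), (0,0,1,0), (−1,−1,−1,2) (i.e., all nonnegative real combinations of these points). Then: (a) σ is almost Gorenstein, witnessed by 𝔪 = (1,1,1,2) ∈ M = Hom(ℤ⁴, ℤ): each of the four generators n satisfies ⟨𝔪, n⟩ = 1, so σ is generated by lattice points on the hyperplane { n : ⟨𝔪, n⟩ = 1 }; but (b) σ is not Gorenstein: there is no 𝔪′ ∈ M such that the monoid σ ∩ ℤ⁴ is generated by lattice points n with ⟨𝔪′, n⟩ = 1. In particular, (0,0,0,1) belongs to σ ∩ ℤ⁴, satisfies ⟨𝔪, (0,0,0,1)⟩ = 2, and is not a sum of elements of σ ∩ ℤ⁴ lying on { n : ⟨𝔪, n⟩ = 1 }. -/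
open Matrix

/-! The lattice points of `σ` are cut out by its facet inequalities `n₃ ≥ 0` and
`2nᵢ + n₃ ≥ 0` (`i < 3`). A lattice point of `σ` at `𝔪`-height one has even last coordinate,
so `e₄ = (0,0,0,1)` is not a sum of such points. If `S` generates `σ ∩ ℤ⁴` and lies at
`𝔪′`-height one, every nonzero point of `σ ∩ ℤ⁴` has height at least one. Since `e₄` is
indecomposable in `σ ∩ ℤ⁴`, it lies in `S` and has height one; but `2 e₄` is the sum of the
four generators of `σ`, so its height is at least four. -/

/-- The cone of all nonnegative real linear combinations of the elements of a
finite set `G ⊆ ℝ^d`. -/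
def coneOf {d : ℕ} (G : Finset (Fin d → ℝ)) : Set (Fin d → ℝ) :=
  { x | ∃ c : (Fin d → ℝ) → ℝ, (∀ v, 0 ≤ c v) ∧ x = ∑ v ∈ G, c v • v }

/-- Coordinatewise embedding of the lattice `ℤ^d` into `ℝ^d`. -/
def intCast {d : ℕ} (n : Fin d → ℤ) : Fin d → ℝ := fun i => (n i : ℝ)

/-- The four generators of the cone of Example 3.2(ii). -/
def gens2 : Finset (Fin 4 → ℤ) :=
  {![1, 0, 0, 0], ![0, 1, 0, 0], ![0, 0, 1, 0], ![-1, -1, -1, 2]}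

/-- The cone `σ = Cone((1,0,0,0), (0,1,0,0), (0,0,1,0), (−1,−1,−1,2)) ⊆ ℝ⁴`. -/
def σ2 : Set (Fin 4 → ℝ) := coneOf (gens2.image intCast)

/-- The almost Gorenstein witness `𝔪 = (1,1,1,2)`. -/
def 𝔪2 : Fin 4 → ℤ := ![1, 1, 1, 2]

lemma intCast_vec4 (a b c e : ℤ) : intCast ![a, b, c, e] = ![(a : ℝ), b, c, e] := by
  funext i; fin_cases i <;> rfl

lemma image_intCast_gens2 :
    gens2.image intCast =
      {![1, 0, 0, 0], ![0, 1, 0, 0], ![0, 0, 1, 0], ![-1, -1, -1, 2]} := by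
  simp [gens2, intCast_vec4]

lemma sum_image_intCast_gens2 (c : (Fin 4 → ℝ) → ℝ) :
    ∑ v ∈ gens2.image intCast, c v • v =
      c ![1, 0, 0, 0] • ![1, 0, 0, 0] + c ![0, 1, 0, 0] • ![0, 1, 0, 0] +
        c ![0, 0, 1, 0] • ![0, 0, 1, 0] + c ![-1, -1, -1, 2] • ![-1, -1, -1, 2] := by
  rw [image_intCast_gens2, Finset.sum_insert (by simp), Finset.sum_insert (by simp),
    Finset.sum_insert (by simp), Finset.sum_singleton, add_assoc, add_assoc]

lemma mem_σ2_iff (x : Fin 4 → ℝ) :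
    x ∈ σ2 ↔ 0 ≤ x 3 ∧ 0 ≤ 2 * x 0 + x 3 ∧ 0 ≤ 2 * x 1 + x 3 ∧ 0 ≤ 2 * x 2 + x 3 := by
  simp only [σ2, coneOf, Set.mem_ofPred_eq, sum_image_intCast_gens2]
  constructor
  · rintro ⟨c, hc, rfl⟩
    have h₁ := hc ![1, 0, 0, 0]
    have h₂ := hc ![0, 1, 0, 0]
    have h₃ := hc ![0, 0, 1, 0]
    have h₄ := hc ![-1, -1, -1, 2]
    simp only [Pi.add_apply, Pi.smul_apply, smul_eq_mul, cons_val]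
    refine ⟨?_, ?_, ?_, ?_⟩ <;> linarith
  · rintro ⟨h3, h0, h1, h2⟩
    -- the coefficients of `x` in the basis of `ℝ⁴` formed by the four generators
    refine ⟨fun v =>
      if v = ![1, 0, 0, 0] then x 0 + x 3 / 2
      else if v = ![0, 1, 0, 0] then x 1 + x 3 / 2
      else if v = ![0, 0, 1, 0] then x 2 + x 3 / 2
      else x 3 / 2, fun v => ?_, ?_⟩
    · dsimp only; split_ifs <;> linarith
    · funext i
      fin_cases i <;> simp

lemma intCast_mem_σ2_iff (n : Fin 4 → ℤ) :
    intCast n ∈ σ2 ↔ 0 ≤ n 3 ∧ 0 ≤ 2 * n 0 + n 3 ∧ 0 ≤ 2 * n 1 + n 3 ∧ 0 ≤ 2 * n 2 + n 3 := by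
  simp only [mem_σ2_iff, intCast]
  norm_cast

lemma eq_zero_or_one_le_dotProduct_of_mem_closure {ι : Type*} [Fintype ι] {m : ι → ℤ}
    {S : Set (ι → ℤ)} (hS : ∀ s ∈ S, m ⬝ᵥ s = 1) {x : ι → ℤ}
    (hx : x ∈ AddSubmonoid.closure S) : x = 0 ∨ 1 ≤ m ⬝ᵥ x := by
  induction hx using AddSubmonoid.closure_induction with
  | mem s hs => exact Or.inr (hS s hs).ge
  | zero => exact Or.inl rfl
  | add x y _ _ hx hy =>
    rcases hx with rfl | hx
    · simpa using hy
    rcases hy with rfl | hy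
    · simpa using Or.inr hx
    right; rw [dotProduct_add]; omega

lemma mem_of_indecomposable_of_mem_closure {M : Type*} [AddMonoid M] {S : Set M} {x : M}
    (hx : x ∈ AddSubmonoid.closure S) (hx0 : x ≠ 0)
    (hirr : ∀ a ∈ AddSubmonoid.closure S, ∀ b ∈ AddSubmonoid.closure S,
      a + b = x → a = 0 ∨ b = 0) : x ∈ S := by
  suffices ∀ y ∈ AddSubmonoid.closure S, y = x → x ∈ S from this x hx rfl
  intro y hy
  induction hy using AddSubmonoid.closure_induction with
  | mem s hs => rintro rfl; exact hs
  | zero => rintro rfl; exact absurd rfl hx0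
  | add a b ha hb iha ihb =>
    intro hab
    rcases hirr a ha b hb hab with rfl | rfl
    · exact ihb (by simpa using hab)
    · exact iha (by simpa using hab)

lemma eq_zero_or_eq_zero_of_add_eq_e₄ {a b : Fin 4 → ℤ} (ha : intCast a ∈ σ2)
    (hb : intCast b ∈ σ2) (hab : a + b = ![0, 0, 0, 1]) : a = 0 ∨ b = 0 := by
  rw [intCast_mem_σ2_iff] at ha hb
  have h i : a i + b i = ![0, 0, 0, 1] i := by rw [← hab]; rfl
  have h0 := h 0; have h1 := h 1; have h2 := h 2; have h3 := h 3
  simp only [cons_val] at h0 h1 h2 h3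
  rcases (by omega : a 3 = 0 ∨ b 3 = 0) with ha3 | hb3
  · left; funext i; fin_cases i <;> simp <;> omega
  · right; funext i; fin_cases i <;> simp <;> omega

lemma even_three_of_𝔪2_dotProduct_eq_one {n : Fin 4 → ℤ} (hn : intCast n ∈ σ2)
    (hm : 𝔪2 ⬝ᵥ n = 1) : Even (n 3) := by
  rw [intCast_mem_σ2_iff] at hn
  simp only [𝔪2, dotProduct, Fin.sum_univ_four, cons_val] at hm
  rw [Int.even_iff]
  omega

lemma not_exists_gorenstein_witness_σ2 :
    ¬ ∃ (𝔪' : Fin 4 → ℤ) (S : Finset (Fin 4 → ℤ)),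
        (∀ s ∈ S, intCast s ∈ σ2 ∧ 𝔪' ⬝ᵥ s = 1) ∧
        ((AddSubmonoid.closure (S : Set (Fin 4 → ℤ)) : AddSubmonoid (Fin 4 → ℤ)) :
            Set (Fin 4 → ℤ)) = { n : Fin 4 → ℤ | intCast n ∈ σ2 } := by
  rintro ⟨m, S, hS, hcl⟩
  have mem_closure_iff (n : Fin 4 → ℤ) : n ∈ AddSubmonoid.closure (S : Set (Fin 4 → ℤ)) ↔
      intCast n ∈ σ2 := Set.ext_iff.1 hcl n
  have one_le (n : Fin 4 → ℤ) (hn : intCast n ∈ σ2) (hn0 : n ≠ 0) : 1 ≤ m ⬝ᵥ n :=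
    (eq_zero_or_one_le_dotProduct_of_mem_closure (fun s hs => (hS s hs).2)
      ((mem_closure_iff n).2 hn)).resolve_left hn0
  have he₄ : m ⬝ᵥ ![0, 0, 0, 1] = 1 := by
    refine (hS _ (mem_of_indecomposable_of_mem_closure ((mem_closure_iff _).2 ?_) (by decide)
      fun a ha b hb => eq_zero_or_eq_zero_of_add_eq_e₄ ((mem_closure_iff a).1 ha)
        ((mem_closure_iff b).1 hb))).2
    exact (intCast_mem_σ2_iff _).2 (by decide)
  have hsum : ![1, 0, 0, 0] + ![0, 1, 0, 0] + ![0, 0, 1, 0] + ![-1, -1, -1, 2] =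
      (2 : ℤ) • (![0, 0, 0, 1] : Fin 4 → ℤ) := by decide
  have hheight := congrArg (m ⬝ᵥ ·) hsum
  simp only [dotProduct_add, dotProduct_smul, he₄, smul_eq_mul] at hheight
  have h₁ := one_le ![1, 0, 0, 0] ((intCast_mem_σ2_iff _).2 (by decide)) (by decide)
  have h₂ := one_le ![0, 1, 0, 0] ((intCast_mem_σ2_iff _).2 (by decide)) (by decide)
  have h₃ := one_le ![0, 0, 1, 0] ((intCast_mem_σ2_iff _).2 (by decide)) (by decide)
  have h₄ := one_le ![-1, -1, -1, 2] ((intCast_mem_σ2_iff _).2 (by decide)) (by decide)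
  omega

lemma e₄_notMem_closure_height_one_𝔪2 :
    ![0, 0, 0, 1] ∉
      AddSubmonoid.closure { n : Fin 4 → ℤ | intCast n ∈ σ2 ∧ 𝔪2 ⬝ᵥ n = 1 } := by
  intro h
  suffices ∀ x ∈ AddSubmonoid.closure { n : Fin 4 → ℤ | intCast n ∈ σ2 ∧ 𝔪2 ⬝ᵥ n = 1 },
      Even (x 3) from absurd (this _ h) (by decide)
  intro x hx
  induction hx using AddSubmonoid.closure_induction with
  | mem n hn => exact even_three_of_𝔪2_dotProduct_eq_one hn.1 hn.2
  | zero => exact Even.zero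
  | add x y _ _ hx hy => exact hx.add hy

/-- Example 3.2(ii): the cone `σ` generated by `(1,0,0,0), (0,1,0,0), (0,0,1,0),
(−1,−1,−1,2)` in `ℤ⁴` is almost Gorenstein with witness `𝔪 = (1,1,1,2)` (every generator
pairs to `1` with `𝔪`), but is not Gorenstein: no `𝔪′ ∈ M` admits a finite set of lattice
points of `σ` on the hyperplane `⟨𝔪′, ·⟩ = 1` generating the monoid `σ ∩ ℤ⁴`.  In
particular `(0,0,0,1) ∈ σ ∩ ℤ⁴` pairs to `2` with `𝔪` and is not a sum of lattice points
of `σ` lying on `⟨𝔪, ·⟩ = 1`. -/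
theorem stmt_2 :
    (∀ g ∈ gens2, 𝔪2 ⬝ᵥ g = 1) ∧
    (¬ ∃ (𝔪' : Fin 4 → ℤ) (S : Finset (Fin 4 → ℤ)),
        (∀ s ∈ S, intCast s ∈ σ2 ∧ 𝔪' ⬝ᵥ s = 1) ∧
        ((AddSubmonoid.closure (S : Set (Fin 4 → ℤ)) : AddSubmonoid (Fin 4 → ℤ)) :
            Set (Fin 4 → ℤ)) = { n : Fin 4 → ℤ | intCast n ∈ σ2 }) ∧
    intCast ![0, 0, 0, 1] ∈ σ2 ∧
    𝔪2 ⬝ᵥ ![0, 0, 0, 1] = 2 ∧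
    ![0, 0, 0, 1] ∉
      AddSubmonoid.closure { n : Fin 4 → ℤ | intCast n ∈ σ2 ∧ 𝔪2 ⬝ᵥ n = 1 } :=
  ⟨by decide, not_exists_gorenstein_witness_σ2, (intCast_mem_σ2_iff _).2 (by decide), by decide,
    e₄_notMem_closure_height_one_𝔪2⟩
end

section
/- Let N be a free ℤ-module of finite rank with dual M = Hom(N, ℤ), let ν be a finite index set, let v : ν → N, and let I ⊆ ν be a subset such that { v(i) : i ∈ ν \ I } spans N ⊗ ℚ over ℚ. Define f_ν : M → (ν → ℤ) by f_ν(m)(i) = m(v(i)) and f_{ν\I} : M → ((ν \ I) → ℤ) by f_{ν\I}(m)(i) = m(v(i)), and let p : (ν → ℤ) → ((ν \ I) → ℤ) be the coordinate projection, so f_{ν\I} = p ∘ f_ν. Then the extension-by-zero inclusion ι : (I → ℤ) → (ν → ℤ) followed by the quotient map to coker(f_ν), together with the map coker(f_ν) → coker(f_{ν\I}) induced by p, form a short exact sequence 0 → (I → ℤ) → coker(f_ν) → coker(f_{ν\I}) → 0 of ℤ-modules. -/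
open TensorProduct

/-- The short exact sequence of character lattices from the proof of Corollary 3.19 of
the paper.  Let `N` be a free `ℤ`-module of finite rank with dual `M`, `ν` a finite index
set, `v : ν → N`, and `I ⊆ ν` a subset such that `{ v i : i ∈ ν \ I }` spans `N ⊗ ℚ`
over `ℚ`.  With `f_ν : M → ℤ^ν`, `f_{ν\I} : M → ℤ^{ν\I}` the evaluation maps,
`p` the coordinate projection and `ι` extension by zero, the sequence
`0 → ℤ^I → coker f_ν → coker f_{ν\I} → 0` is exact, where the first map is `ι` followed
by the quotient map and the second is induced by `p`. -/
theorem stmt_5 (N : Type*) [AddCommGroup N] [Module ℤ N]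
    [Module.Free ℤ N] [Module.Finite ℤ N]
    (ν : Type*) [Fintype ν] (v : ν → N) (I : Set ν) [DecidablePred (· ∈ I)]
    (hspan : Submodule.span ℚ
        (Set.range fun i : {i : ν // i ∉ I} => ((1 : ℚ) ⊗ₜ[ℤ] v i.1 : ℚ ⊗[ℤ] N)) = ⊤)
    (fν : Module.Dual ℤ N →ₗ[ℤ] (ν → ℤ))
    (hfν : ∀ (m : Module.Dual ℤ N) (i : ν), fν m i = m (v i))
    (f' : Module.Dual ℤ N →ₗ[ℤ] ({i : ν // i ∉ I} → ℤ))
    (hf' : ∀ (m : Module.Dual ℤ N) (i : {i : ν // i ∉ I}), f' m i = m (v i.1))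
    (p : (ν → ℤ) →ₗ[ℤ] ({i : ν // i ∉ I} → ℤ))
    (hp : ∀ (x : ν → ℤ) (i : {i : ν // i ∉ I}), p x i = x i.1)
    (ι : ({i : ν // i ∈ I} → ℤ) →ₗ[ℤ] (ν → ℤ))
    (hι : ∀ (c : {i : ν // i ∈ I} → ℤ) (i : ν),
      ι c i = if h : i ∈ I then c ⟨i, h⟩ else 0) :
    ∃ β : ((ν → ℤ) ⧸ LinearMap.range fν) →ₗ[ℤ]
        (({i : ν // i ∉ I} → ℤ) ⧸ LinearMap.range f'),
      (∀ x : ν → ℤ, β (Submodule.Quotient.mk x) = Submodule.Quotient.mk (p x)) ∧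
      Function.Injective ((LinearMap.range fν).mkQ ∘ₗ ι) ∧
      Function.Surjective β ∧
      LinearMap.range ((LinearMap.range fν).mkQ ∘ₗ ι) = LinearMap.ker β := by

  classical
  -- Key: a dual vector vanishing on `v i` for `i ∉ I` is zero.
  have key : ∀ m : Module.Dual ℤ N, (∀ i : {i : ν // i ∉ I}, m (v i.1) = 0) → m = 0 := by
    intro m hm
    set m' : N →ₗ[ℤ] ℚ := (Algebra.linearMap ℤ ℚ).comp m with hm'
    set g : ℚ ⊗[ℤ] N →ₗ[ℚ] ℚ := LinearMap.liftBaseChange ℚ m' with hg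
    have hker : Submodule.span ℚ
        (Set.range fun i : {i : ν // i ∉ I} => ((1 : ℚ) ⊗ₜ[ℤ] v i.1 : ℚ ⊗[ℤ] N))
        ≤ LinearMap.ker g := by
      rw [Submodule.span_le]
      rintro _ ⟨i, rfl⟩
      simp [hg, hm', LinearMap.liftBaseChange_tmul, hm i]
    rw [hspan, top_le_iff, LinearMap.ker_eq_top] at hker
    ext x
    have h0 : g ((1 : ℚ) ⊗ₜ[ℤ] x) = 0 := by rw [hker]; rfl
    simp only [hg, hm', LinearMap.liftBaseChange_tmul, LinearMap.comp_apply,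
      Algebra.linearMap_apply, one_smul] at h0
    rw [show (0 : Module.Dual ℤ N) x = 0 from rfl]
    have h1 : ((m x : ℤ) : ℚ) = 0 := h0
    exact_mod_cast h1
  have hpf : ∀ m, p (fν m) = f' m := fun m => funext fun i => by rw [hp, hfν, hf']
  have hle : LinearMap.range fν ≤ LinearMap.ker ((LinearMap.range f').mkQ ∘ₗ p) := by
    rintro _ ⟨m, rfl⟩
    simp only [LinearMap.mem_ker, LinearMap.comp_apply, hpf m, Submodule.mkQ_apply,
      Submodule.Quotient.mk_eq_zero]
    exact ⟨m, rfl⟩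
  refine ⟨Submodule.liftQ _ _ hle, fun x => rfl, ?_, ?_, ?_⟩
  · -- injectivity
    rw [← LinearMap.ker_eq_bot, LinearMap.ker_eq_bot']
    intro c hc
    have : ι c ∈ LinearMap.range fν := by
      simpa [Submodule.Quotient.mk_eq_zero] using hc
    obtain ⟨m, hmι⟩ := this
    have hm0 : m = 0 := by
      apply key
      intro i
      have := congrFun hmι i.1
      rw [hfν, hι, dif_neg i.2] at this
      exact this
    have hι0 : ι c = 0 := by rw [← hmι, hm0, map_zero]
    funext j
    have := congrFun hι0 j.1
    rw [hι, dif_pos j.2] at this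
    simpa using this
  · -- surjectivity
    intro z
    obtain ⟨y, rfl⟩ := Submodule.mkQ_surjective _ z
    refine ⟨Submodule.Quotient.mk (fun i => if h : i ∉ I then y ⟨i, h⟩ else 0), ?_⟩
    show Submodule.Quotient.mk (p _) = _
    congr 1
    funext i
    rw [hp, dif_pos i.2]
  · -- exactness in the middle
    apply le_antisymm
    · rintro _ ⟨c, rfl⟩
      simp only [LinearMap.mem_ker, LinearMap.comp_apply, Submodule.mkQ_apply]
      show Submodule.Quotient.mk (p (ι c)) = 0
      rw [Submodule.Quotient.mk_eq_zero]
      have : p (ι c) = 0 := by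
        funext i
        rw [hp, hι, dif_neg i.2]; rfl
      rw [this]; exact Submodule.zero_mem _
    · intro z hz
      obtain ⟨x, rfl⟩ := Submodule.mkQ_surjective _ z
      have hz' : Submodule.Quotient.mk (p x)
          = (0 : ({i : ν // i ∉ I} → ℤ) ⧸ LinearMap.range f') := hz
      rw [Submodule.Quotient.mk_eq_zero] at hz'
      obtain ⟨m, hmx⟩ := hz'
      refine ⟨fun j => x j.1 - fν m j.1, ?_⟩
      show Submodule.Quotient.mk (ι _) = Submodule.Quotient.mk x
      rw [Submodule.Quotient.eq]
      have hιeq : ι (fun j => x j.1 - fν m j.1) = x - fν m := by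
        funext i
        rw [hι]
        by_cases h : i ∈ I
        · rw [dif_pos h]; rfl
        · rw [dif_neg h]
          have := congrFun hmx ⟨i, h⟩
          rw [hf'] at this
          have hfx : fν m i = x i := by rw [hfν, this, hp]
          show 0 = x i - fν m i
          omega
      rw [hιeq]
      exact ⟨-m, by simp⟩
end

section
/- Let N be a free ℤ-module of finite rank with dual M, let v₁, …, v_n ∈ N, and let 𝔪 : N → ℚ be a ℚ-linear functional. Work in the ℚ-vector space Q = ℚⁿ / f_ν(M_ℚ), where f_ν : M_ℚ → ℚⁿ is the map m ↦ (m(v₁), …, m(v_n)), with quotient map π : ℚⁿ → Q, and set χ_K := −Σᵢ₌₁ⁿ π(eᵢ) and A := { i : 𝔪(vᵢ) ≠ 1 }. Then χ_K = Σ_{i∈A} (𝔪(vᵢ) − 1)·π(eᵢ) in Q. Consequently: (1) if 𝔪(vᵢ) > 1 for all i ∈ A, then χ_K is a nonnegative rational linear combination of { π(eᵢ) : i ∈ A }; (2) if 𝔪(vᵢ) < 1 for all i ∈ A, then −χ_K is a nonnegative rational linear combination of { π(eᵢ) : i ∈ A }; (3) if A = ∅, then χ_K = 0. -/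
/-- The combinatorial core of Lemma 3.20 ('Orlov setup') of the paper.  Work in
`Q = ℚⁿ / f_ν(M_ℚ)` with quotient map `π`, and set `χ_K := −Σᵢ π(eᵢ)` and
`A := { i : 𝔪(vᵢ) ≠ 1 }`.  Then `χ_K = Σ_{i∈A} (𝔪(vᵢ) − 1)·π(eᵢ)`; consequently if
`𝔪(vᵢ) > 1` on `A` then `χ_K` is a nonnegative rational combination of the `π(eᵢ)`,
`i ∈ A`; if `𝔪(vᵢ) < 1` on `A` then `−χ_K` is such a combination; and if `A = ∅` then
`χ_K = 0`. -/
theorem stmt_7 (N : Type*) [AddCommGroup N] [Module ℤ N]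
    [Module.Free ℤ N] [Module.Finite ℤ N]
    (n : ℕ) (v : Fin n → N) (𝔪 : N →ₗ[ℤ] ℚ)
    (f : (N →ₗ[ℤ] ℚ) →ₗ[ℚ] (Fin n → ℚ))
    (hf : ∀ (m : N →ₗ[ℤ] ℚ) (i : Fin n), f m i = m (v i)) :
    let π : (Fin n → ℚ) → ((Fin n → ℚ) ⧸ LinearMap.range f) := Submodule.Quotient.mk
    let χK : (Fin n → ℚ) ⧸ LinearMap.range f := -∑ i, π (Pi.single i 1)
    let A : Finset (Fin n) := Finset.univ.filter fun i => 𝔪 (v i) ≠ 1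
    (χK = ∑ i ∈ A, (𝔪 (v i) - 1) • π (Pi.single i 1)) ∧
    ((∀ i ∈ A, 1 < 𝔪 (v i)) → ∃ c : Fin n → ℚ, (∀ i, 0 ≤ c i) ∧
      χK = ∑ i ∈ A, c i • π (Pi.single i 1)) ∧
    ((∀ i ∈ A, 𝔪 (v i) < 1) → ∃ c : Fin n → ℚ, (∀ i, 0 ≤ c i) ∧
      -χK = ∑ i ∈ A, c i • π (Pi.single i 1)) ∧
    (A = ∅ → χK = 0) := by
  intro π χK A
  have hπmem : π (f 𝔪) = 0 := by
    simpa [π] using (Submodule.Quotient.mk_eq_zero _).2 ⟨𝔪, rfl⟩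
  have hπ : ∀ x y : Fin n → ℚ, π (x + y) = π x + π y := fun x y => rfl
  have key : χK = ∑ i ∈ A, (𝔪 (v i) - 1) • π (Pi.single i 1) := by
    have h1 : ∑ i ∈ A, (𝔪 (v i) - 1) • π ((Pi.single i 1 : Fin n → ℚ))
        = ∑ i, (𝔪 (v i) - 1) • π ((Pi.single i 1 : Fin n → ℚ)) := by
      rw [Finset.sum_filter]
      refine Finset.sum_congr rfl fun i _ => ?_
      by_cases hi : 𝔪 (v i) ≠ 1
      · rw [if_pos hi]
      · rw [if_neg hi]
        rw [not_not] at hi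
        simp [hi]
    have h2 : ∑ i, (𝔪 (v i) - 1) • π ((Pi.single i 1 : Fin n → ℚ))
        = π (∑ i, (𝔪 (v i) - 1) • (Pi.single i 1 : Fin n → ℚ)) := by
      simp only [π]
      rw [← Submodule.mkQ_apply, map_sum]
      simp [Submodule.mkQ_apply]
    have h3 : (∑ i, (𝔪 (v i) - 1) • (Pi.single i 1 : Fin n → ℚ))
        = f 𝔪 - ∑ i, Pi.single i 1 := by
      funext j
      simp [sub_smul, Finset.sum_sub_distrib, hf, Pi.single_apply,
        Finset.sum_ite_eq', mul_comm]
    have h4 : π (f 𝔪 - ∑ i, Pi.single i 1) = - ∑ i, π (Pi.single i 1) := by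
      simp only [π]
      rw [← Submodule.mkQ_apply, map_sub, map_sum]
      simp [Submodule.mkQ_apply, hπmem, π]
    rw [h1, h2, h3, h4]
  refine ⟨key, ?_, ?_, ?_⟩
  · intro h
    refine ⟨fun i => if i ∈ A then 𝔪 (v i) - 1 else 0, ?_, ?_⟩
    · intro i
      by_cases hi : i ∈ A
      · simp only [hi, if_pos]
        linarith [h i hi]
      · simp [hi]
    · rw [key]
      exact Finset.sum_congr rfl fun i hi => by simp [hi]
  · intro h
    refine ⟨fun i => if i ∈ A then 1 - 𝔪 (v i) else 0, ?_, ?_⟩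
    · intro i
      by_cases hi : i ∈ A
      · simp only [hi, if_pos]
        linarith [h i hi]
      · simp [hi]
    · rw [key, ← Finset.sum_neg_distrib]
      refine Finset.sum_congr rfl fun i hi => ?_
      simp only [if_pos hi, ← neg_smul]
      ring_nf
  · intro h
    rw [key, h, Finset.sum_empty]
end

section
/- Let N be a free ℤ-module of finite rank with dual M, let v₁, …, v_n ∈ N, and let 𝔪 : N → ℚ be a ℚ-linear functional. Set A := { i : 𝔪(vᵢ) ≠ 1 }, let Σ₁ ⊆ {1, …, n} be a subset with 𝔪(vᵢ) = 1 for all i ∈ Σ₁, and let R ⊆ {1, …, n} be a subset with A ⊆ R. Let W := ℚⁿ × ℚ, and let U ⊆ W be the ℚ-subspace spanned by { (f_ν(m), 0) : m ∈ M_ℚ } together with the vectors (e_j, r_j) for all j ∉ Σ₁, where f_ν : M_ℚ → ℚⁿ is m ↦ (m(v₁), …, m(v_n)), e_j is the j-th standard basis vector of ℚⁿ, and r_j = 1 if j ∈ R and r_j = 0 otherwise. Then in the quotient W/U one has the equality of classes [(−Σᵢ₌₁ⁿ eᵢ, −|R|)] = [(0, −Σ_{i∈A} 𝔪(vᵢ)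 + |A| − |R|)]. -/
/-- Lemma 4.3 of the paper (rational case).  In `W = ℚⁿ × ℚ` let `U` be the subspace
spanned by the image of `f_ν` (placed in the first factor) together with the vectors
`(e_j, r_j)` for `j ∉ Σ₁`, where `r_j = 1` if `j ∈ R` and `0` otherwise.  If every
`i ∈ Σ₁` satisfies `𝔪(vᵢ) = 1` and `A = { i : 𝔪(vᵢ) ≠ 1 } ⊆ R`, then in `W/U` one has
`[(−Σᵢ eᵢ, −|R|)] = [(0, −Σ_{i∈A} 𝔪(vᵢ) + |A| − |R|)]`. -/
theorem stmt_8 (N : Type*) [AddCommGroup N] [Module ℤ N]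
    [Module.Free ℤ N] [Module.Finite ℤ N]
    (n : ℕ) (v : Fin n → N) (𝔪 : N →ₗ[ℤ] ℚ)
    (S1 R : Finset (Fin n))
    (hS1 : ∀ i ∈ S1, 𝔪 (v i) = 1) :
    let A : Finset (Fin n) := Finset.univ.filter fun i => 𝔪 (v i) ≠ 1
    A ⊆ R →
    let r : Fin n → ℚ := fun j => if j ∈ R then 1 else 0
    let U : Submodule ℚ ((Fin n → ℚ) × ℚ) := Submodule.span ℚ
      ({ q : (Fin n → ℚ) × ℚ | ∃ m : N →ₗ[ℤ] ℚ, q = (fun i => m (v i), 0) } ∪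
       { q : (Fin n → ℚ) × ℚ | ∃ j, j ∉ S1 ∧ q = (Pi.single j 1, r j) })
    (Submodule.Quotient.mk ((-∑ i, Pi.single i (1 : ℚ), -(R.card : ℚ))) :
        ((Fin n → ℚ) × ℚ) ⧸ U) =
      Submodule.Quotient.mk
        (((0 : Fin n → ℚ), -∑ i ∈ A, 𝔪 (v i) + (A.card : ℚ) - (R.card : ℚ))) := by
  intro A hAR r U
  rw [Submodule.Quotient.eq]
  have h1 : ((fun i => 𝔪 (v i), 0) : (Fin n → ℚ) × ℚ) ∈ U :=
    Submodule.subset_span (Or.inl ⟨𝔪, rfl⟩)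
  have h2 : ∀ j ∉ S1, ((Pi.single j 1, r j) : (Fin n → ℚ) × ℚ) ∈ U :=
    fun j hj => Submodule.subset_span (Or.inr ⟨j, hj, rfl⟩)
  have key : ((-∑ i, Pi.single i (1 : ℚ), -(R.card : ℚ)) -
      ((0 : Fin n → ℚ), -∑ i ∈ A, 𝔪 (v i) + (A.card : ℚ) - (R.card : ℚ)))
      = -((fun i => 𝔪 (v i), 0) : (Fin n → ℚ) × ℚ) +
        ∑ j ∈ S1ᶜ, (𝔪 (v j) - 1) • ((Pi.single j 1, r j) : (Fin n → ℚ) × ℚ) := by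
    have hAS1 : A ⊆ S1ᶜ := by
      intro i hi
      simp only [A, Finset.mem_filter] at hi
      simp only [Finset.mem_compl]
      exact fun hS => hi.2 (hS1 i hS)
    refine Prod.ext ?_ ?_
    · simp only [Prod.fst_sub, Prod.fst_add, Prod.fst_neg, Prod.smul_mk, Prod.fst_sum]
      funext i
      simp only [Pi.sub_apply, Pi.add_apply, Pi.neg_apply, Finset.sum_apply,
        Pi.smul_apply, Pi.zero_apply, Pi.single_apply, smul_eq_mul, mul_ite, mul_one, mul_zero]
      rw [Finset.sum_ite_eq S1ᶜ i fun j => 𝔪 (v j) - 1]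
      rw [Finset.sum_ite_eq (Finset.univ) i fun _ => (1 : ℚ)]
      by_cases hi : i ∈ S1
      · simp only [Finset.mem_compl, hi, not_true_eq_false, if_false, Finset.mem_univ,
          if_true, hS1 i hi]
        ring
      · simp only [Finset.mem_compl, hi, not_false_eq_true, if_true, Finset.mem_univ]
        ring
    · simp only [Prod.snd_sub, Prod.snd_add, Prod.snd_neg, Prod.smul_mk, Prod.snd_sum,
        smul_eq_mul]
      have : ∑ j ∈ S1ᶜ, (𝔪 (v j) - 1) * r j = ∑ j ∈ A, (𝔪 (v j) - 1) * r j := by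
        refine (Finset.sum_subset hAS1 ?_).symm
        intro j _ hj
        have : 𝔪 (v j) = 1 := by
          by_contra h
          exact hj (by simp [A, h])
        rw [this]; ring
      rw [this]
      have : ∑ j ∈ A, (𝔪 (v j) - 1) * r j = ∑ j ∈ A, (𝔪 (v j) - 1) := by
        refine Finset.sum_congr rfl fun j hj => ?_
        have : r j = 1 := by simp [r, hAR hj]
        rw [this, mul_one]
      rw [this, Finset.sum_sub_distrib]
      simp
      ring
  rw [key]
  exact Submodule.add_mem _ (Submodule.neg_mem _ h1)
    (Submodule.sum_mem _ fun j hj =>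
      Submodule.smul_mem _ _ (h2 j (Finset.mem_compl.mp hj)))
end

section
/- Let N be a free ℤ-module of finite rank with dual M = Hom(N, ℤ), let v₁, …, v_n ∈ N, and let 𝔪 ∈ M (an integer-valued functional, as in the almost Gorenstein case). Set A := { i : ⟨𝔪, vᵢ⟩ ≠ 1 }, let Σ₁ ⊆ {1, …, n} be a subset with ⟨𝔪, vᵢ⟩ = 1 for all i ∈ Σ₁, and let R ⊆ {1, …, n} with A ⊆ R. Let W := ℤⁿ × ℤ, and let U ⊆ W be the subgroup generated by { (f_ν(m), 0) : m ∈ M } together with the vectors (e_j, r_j) for all j ∉ Σ₁, where f_ν : M → ℤⁿ is m ↦ (⟨m, v₁⟩, …, ⟨m, v_n⟩), e_j is the j-th standard basis vector of ℤⁿ, and r_j = 1 if j ∈ R and r_j = 0 otherwise. Then in the quotient ℤ-module W/U one has the equality of classes [(−Σᵢ₌₁ⁿ eᵢ, −|R|)] = [(0, −Σ_{i∈A} ⟨𝔪, vᵢ⟩ + |A| − |R|)]. -/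
/-- Lemma 4.3 of the paper, integral ('almost Gorenstein', `𝔪 ∈ M`) case.  In
`W = ℤⁿ × ℤ` let `U` be the subgroup generated by the image of `f_ν` (placed in the
first factor) together with the vectors `(e_j, r_j)` for `j ∉ Σ₁`, where `r_j = 1` if
`j ∈ R` and `0` otherwise.  If every `i ∈ Σ₁` satisfies `⟨𝔪, vᵢ⟩ = 1` and
`A = { i : ⟨𝔪, vᵢ⟩ ≠ 1 } ⊆ R`, then in `W/U` one has
`[(−Σᵢ eᵢ, −|R|)] = [(0, −Σ_{i∈A} ⟨𝔪, vᵢ⟩ + |A| − |R|)]`. -/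
theorem stmt_9 (N : Type*) [AddCommGroup N] [Module ℤ N]
    [Module.Free ℤ N] [Module.Finite ℤ N]
    (n : ℕ) (v : Fin n → N) (𝔪 : Module.Dual ℤ N)
    (S1 R : Finset (Fin n))
    (hS1 : ∀ i ∈ S1, 𝔪 (v i) = 1) :
    let A : Finset (Fin n) := Finset.univ.filter fun i => 𝔪 (v i) ≠ 1
    A ⊆ R →
    let r : Fin n → ℤ := fun j => if j ∈ R then 1 else 0
    let U : Submodule ℤ ((Fin n → ℤ) × ℤ) := Submodule.span ℤ
      ({ q : (Fin n → ℤ) × ℤ | ∃ m : Module.Dual ℤ N, q = (fun i => m (v i), 0) } ∪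
       { q : (Fin n → ℤ) × ℤ | ∃ j, j ∉ S1 ∧ q = (Pi.single j 1, r j) })
    (Submodule.Quotient.mk ((-∑ i, Pi.single i (1 : ℤ), -(R.card : ℤ))) :
        ((Fin n → ℤ) × ℤ) ⧸ U) =
      Submodule.Quotient.mk
        (((0 : Fin n → ℤ), -∑ i ∈ A, 𝔪 (v i) + (A.card : ℤ) - (R.card : ℤ))) := by
  intro A hAR r U
  rw [Submodule.Quotient.eq]
  have h1 : ((fun i => 𝔪 (v i), 0) : (Fin n → ℤ) × ℤ) ∈ U :=
    Submodule.subset_span (Or.inl ⟨𝔪, rfl⟩)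
  have h2 : ∀ i ∈ A, ((Pi.single i 1, r i) : (Fin n → ℤ) × ℤ) ∈ U := by
    intro i hi
    have hiS : i ∉ S1 := fun hS => (Finset.mem_filter.mp hi).2 (hS1 i hS)
    exact Submodule.subset_span (Or.inr ⟨i, hiS, rfl⟩)
  have key : ((-∑ i, Pi.single i (1 : ℤ), -(R.card : ℤ)) : (Fin n → ℤ) × ℤ) -
      ((0 : Fin n → ℤ), -∑ i ∈ A, 𝔪 (v i) + (A.card : ℤ) - (R.card : ℤ)) =
      (∑ i ∈ A, (𝔪 (v i) - 1) • ((Pi.single i 1, r i) : (Fin n → ℤ) × ℤ)) -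
        ((fun i => 𝔪 (v i), 0) : (Fin n → ℤ) × ℤ) := by
    have hr : ∀ i ∈ A, r i = 1 := fun i hi => if_pos (hAR hi)
    ext j
    · simp only [Prod.fst_sub, Prod.fst_sum, Prod.smul_fst, Pi.sub_apply, Pi.neg_apply,
        Finset.sum_apply, Pi.smul_apply, Pi.single_apply, smul_eq_mul, mul_ite, mul_one,
        mul_zero]
      rw [Finset.sum_ite_eq A j (fun i => 𝔪 (v i) - 1)]
      by_cases hj : j ∈ A
      · simp [hj, Finset.sum_ite_eq]
      · have : 𝔪 (v j) = 1 := by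
          by_contra h
          exact hj (Finset.mem_filter.mpr ⟨Finset.mem_univ j, h⟩)
        simp [hj, this, Finset.sum_ite_eq]
    · simp only [Prod.snd_sub, Prod.snd_sum, Prod.smul_snd, smul_eq_mul]
      have hsum : ∑ i ∈ A, (𝔪 (v i) - 1) * r i = ∑ i ∈ A, 𝔪 (v i) - (A.card : ℤ) := by
        rw [Finset.sum_congr rfl fun i hi => by rw [hr i hi, mul_one],
          Finset.sum_sub_distrib]
        simp
      rw [hsum]
      ring
  rw [key]
  exact Submodule.sub_mem U (Submodule.sum_mem U fun i hi =>
    Submodule.smul_mem U _ (h2 i hi)) h1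
end
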